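/- arXiv:2412.01722 — 3 statements merged into one kernel-verified Lean document; each statement's English description precedes it below -/
import Mathlib

section
/- Let A be a bounded lattice with canonical extension A^δ, and let k ∈ K(A^δ) be closed and o₁, o₂ ∈ O(A^δ) open. If k ≤ o₁ ∨ o₂ then there exist a, b₁, b₂ ∈ A with k ≤ a, b₁ ≤ o₁, b₂ ≤ o₂, and a ≤ b₁ ∨ b₂. -/
variable {α : Type*} [CompleteLattice α]

/-- An element is closed if it is the meet of a nonempty subset of S. -/
def IsClosedElem (S : Set α) (k : α) : Prop :=
  ∃ F : Set α, F ⊆ S ∧ F.Nonempty ∧ k = sInf F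

/-- An element is open if it is the join of a nonempty subset of S. -/
def IsOpenElem (S : Set α) (o : α) : Prop :=
  ∃ I : Set α, I ⊆ S ∧ I.Nonempty ∧ o = sSup I

/-- S is dense: every element is a join of closed elements and a meet of open elements. -/
def IsDenseSub (S : Set α) : Prop :=
  ∀ u : α, u = sSup {k | IsClosedElem S k ∧ k ≤ u} ∧
           u = sInf {o | IsOpenElem S o ∧ u ≤ o}

/-- S is compact. -/
def IsCompactSub (S : Set α) : Prop :=
  ∀ F I : Set α, F ⊆ S → I ⊆ S → F.Nonempty → I.Nonempty → sInf F ≤ sSup I →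
    ∃ a ∈ F, ∃ b ∈ I, a ≤ b

/-- S is a bounded sublattice. -/
def IsBoundedSublattice (S : Set α) : Prop :=
  ⊥ ∈ S ∧ ⊤ ∈ S ∧ ∀ a ∈ S, ∀ b ∈ S, a ⊔ b ∈ S ∧ a ⊓ b ∈ S

/-! Compactness applied to the family of pairwise joins `I₁ ⊻ I₂`, whose join dominates
`sSup I₁ ⊔ sSup I₂`, produces a single `a ∈ F` below a single join `b₁ ⊔ b₂`. -/

open scoped SetFamily

theorem sup_sSup_le_sSup_sups {s t : Set α} (hs : s.Nonempty) (ht : t.Nonempty) :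
    sSup s ⊔ sSup t ≤ sSup (s ⊻ t) := by
  obtain ⟨a, ha⟩ := hs
  obtain ⟨b, hb⟩ := ht
  exact sup_le (sSup_le fun x hx => le_sSup_of_le (Set.mem_sups.2 ⟨x, hx, b, hb, rfl⟩) le_sup_left)
    (sSup_le fun y hy => le_sSup_of_le (Set.mem_sups.2 ⟨a, ha, y, hy, rfl⟩) le_sup_right)

theorem sups_subset_of_sup_mem {S s t : Set α} (hS : ∀ a ∈ S, ∀ b ∈ S, a ⊔ b ∈ S)
    (hs : s ⊆ S) (ht : t ⊆ S) : s ⊻ t ⊆ S := by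
  rintro _ ⟨a, ha, b, hb, rfl⟩
  exact hS a (hs ha) b (ht hb)

theorem IsCompactSub.exists_le_sup {S F I₁ I₂ : Set α} (hc : IsCompactSub S)
    (hS : ∀ a ∈ S, ∀ b ∈ S, a ⊔ b ∈ S) (hF : F ⊆ S) (hI₁ : I₁ ⊆ S) (hI₂ : I₂ ⊆ S)
    (hFne : F.Nonempty) (hI₁ne : I₁.Nonempty) (hI₂ne : I₂.Nonempty)
    (h : sInf F ≤ sSup I₁ ⊔ sSup I₂) :
    ∃ a ∈ F, ∃ b₁ ∈ I₁, ∃ b₂ ∈ I₂, a ≤ b₁ ⊔ b₂ := by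
  obtain ⟨a, ha, _, ⟨b₁, hb₁, b₂, hb₂, rfl⟩, hab⟩ :=
    hc F (I₁ ⊻ I₂) hF (sups_subset_of_sup_mem hS hI₁ hI₂) hFne (hI₁ne.sups hI₂ne)
      (h.trans (sup_sSup_le_sSup_sups hI₁ne hI₂ne))
  exact ⟨a, ha, b₁, hb₁, b₂, hb₂, hab⟩

theorem stmt9_general (S : Set α) (hS : IsBoundedSublattice S)
    (hc : IsCompactSub S) (k o₁ o₂ : α)
    (hk : IsClosedElem S k) (ho₁ : IsOpenElem S o₁) (ho₂ : IsOpenElem S o₂)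
    (h : k ≤ o₁ ⊔ o₂) :
    ∃ a ∈ S, ∃ b₁ ∈ S, ∃ b₂ ∈ S, k ≤ a ∧ b₁ ≤ o₁ ∧ b₂ ≤ o₂ ∧ a ≤ b₁ ⊔ b₂ := by
  obtain ⟨F, hFS, hFne, rfl⟩ := hk
  obtain ⟨I₁, hI₁S, hI₁ne, rfl⟩ := ho₁
  obtain ⟨I₂, hI₂S, hI₂ne, rfl⟩ := ho₂
  obtain ⟨a, ha, b₁, hb₁, b₂, hb₂, hab⟩ :=
    hc.exists_le_sup (fun a ha b hb => (hS.2.2 a ha b hb).1) hFS hI₁S hI₂S hFne hI₁ne hI₂ne h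
  exact ⟨a, hFS ha, b₁, hI₁S hb₁, b₂, hI₂S hb₂, sInf_le ha, le_sSup hb₁, le_sSup hb₂, hab⟩

theorem stmt9 (S : Set α) (hS : IsBoundedSublattice S) (hd : IsDenseSub S)
    (hc : IsCompactSub S) (k o₁ o₂ : α)
    (hk : IsClosedElem S k) (ho₁ : IsOpenElem S o₁) (ho₂ : IsOpenElem S o₂)
    (h : k ≤ o₁ ⊔ o₂) :
    ∃ a ∈ S, ∃ b₁ ∈ S, ∃ b₂ ∈ S, k ≤ a ∧ b₁ ≤ o₁ ∧ b₂ ≤ o₂ ∧ a ≤ b₁ ⊔ b₂ :=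
  stmt9_general S hS hc k o₁ o₂ hk ho₁ ho₂ h
end

section
/- Let A be a bounded lattice equipped with a subordination relation ≺ and canonical extension A^δ. Define ◇ : A → A^δ by ◇a = ⋀{b ∈ A | a ≺ b}. Then for all a, b ∈ A: ◇a ≤ b (in A^δ) if and only if a ≺ b. -/
variable {α : Type*} [CompleteLattice α]

/-- A subordination relation on the sublattice S. -/
def IsSubordination (S : Set α) (R : α → α → Prop) : Prop :=
  R ⊥ ⊥ ∧ R ⊤ ⊤ ∧
  (∀ a ∈ S, ∀ b ∈ S, ∀ c ∈ S, R a b → R a c → R a (b ⊓ c)) ∧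
  (∀ a ∈ S, ∀ b ∈ S, ∀ c ∈ S, R a c → R b c → R (a ⊔ b) c) ∧
  (∀ a ∈ S, ∀ b ∈ S, ∀ c ∈ S, ∀ d ∈ S, a ≤ b → R b c → c ≤ d → R a d)

/-! Compactness, applied to the meet of the nonempty family `{c ∈ S | a ≺ c}` below the single
element `b`, produces some `c ∈ S` with `a ≺ c ≤ b`; then `a ≺ b` by (S4). -/

theorem IsCompactSub.exists_le_of_sInf_le {S : Set α} (hc : IsCompactSub S) {F : Set α}
    (hFS : F ⊆ S) (hF : F.Nonempty) {b : α} (hb : b ∈ S) (h : sInf F ≤ b) :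
    ∃ c ∈ F, c ≤ b := by
  obtain ⟨c, hcF, b', rfl, hcb⟩ :=
    hc F {b} hFS (Set.singleton_subset_iff.mpr hb) hF (Set.singleton_nonempty b)
      (by rwa [sSup_singleton])
  exact ⟨c, hcF, hcb⟩

namespace IsSubordination

variable {S : Set α} {R : α → α → Prop}

theorem mono_right (hR : IsSubordination S R) {a b c : α} (ha : a ∈ S) (hb : b ∈ S)
    (hc : c ∈ S) (hab : R a b) (hbc : b ≤ c) : R a c :=
  hR.2.2.2.2 a ha a ha b hb c hc le_rfl hab hbc

theorem rel_top (hR : IsSubordination S R) (htop : ⊤ ∈ S) {a : α} (ha : a ∈ S) : R a ⊤ :=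
  hR.2.2.2.2 a ha ⊤ htop ⊤ htop ⊤ htop le_top hR.2.1 le_rfl

end IsSubordination

theorem stmt10_general (S : Set α) (hS : IsBoundedSublattice S)
    (hc : IsCompactSub S) (R : α → α → Prop) (hR : IsSubordination S R) :
    ∀ a ∈ S, ∀ b ∈ S, (sInf {c | c ∈ S ∧ R a c} ≤ b ↔ R a b) := by
  intro a ha b hb
  refine ⟨fun h => ?_, fun h => sInf_le ⟨hb, h⟩⟩
  have hne : {c | c ∈ S ∧ R a c}.Nonempty := ⟨⊤, hS.2.1, hR.rel_top hS.2.1 ha⟩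
  obtain ⟨c, ⟨hcS, hac⟩, hcb⟩ := hc.exists_le_of_sInf_le (fun _ hx => hx.1) hne hb h
  exact hR.mono_right ha hcS hb hac hcb

theorem stmt10 (S : Set α) (hS : IsBoundedSublattice S) (hd : IsDenseSub S)
    (hc : IsCompactSub S) (R : α → α → Prop) (hR : IsSubordination S R) :
    ∀ a ∈ S, ∀ b ∈ S, (sInf {c | c ∈ S ∧ R a c} ≤ b ↔ R a b) :=
  stmt10_general S hS hc R hR
end

section
/- Let A be a bounded lattice equipped with a subordination relation ≺ and canonical extension A^δ. Define ■ : A → A^δ by ■a = ⋁{b ∈ A | b ≺ a}. Then for all a, b ∈ A: a ≤ ■b (in A^δ) if and only if a ≺ b. -/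
/-! Since `⊥ ≺ b`, the join `■b` is taken over a nonempty subset of `A`, so compactness turns
`a ≤ ■b` into `a ≤ c` for a single `c ≺ b`, and then `a ≺ b` by (S4). -/

variable {α : Type*} [CompleteLattice α]

theorem IsCompactSub.exists_le_of_le_sSup {S : Set α} (hc : IsCompactSub S) {a : α} (ha : a ∈ S)
    {I : Set α} (hIS : I ⊆ S) (hI : I.Nonempty) (h : a ≤ sSup I) : ∃ b ∈ I, a ≤ b := by
  obtain ⟨_, rfl, b, hb, hab⟩ :=
    hc {a} I (Set.singleton_subset_iff.mpr ha) hIS (Set.singleton_nonempty a) hI (by simpa using h)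
  exact ⟨b, hb, hab⟩

namespace IsSubordination

variable {S : Set α} {R : α → α → Prop}

theorem rel_of_le_left (hR : IsSubordination S R) {a b c : α} (ha : a ∈ S) (hb : b ∈ S) (hc : c ∈ S) (hab : a ≤ b)
    (hbc : R b c) : R a c :=
  hR.2.2.2.2 a ha b hb c hc c hc hab hbc le_rfl

theorem bot_rel (hR : IsSubordination S R) (hbot : ⊥ ∈ S) {b : α} (hb : b ∈ S) : R ⊥ b :=
  hR.2.2.2.2 ⊥ hbot ⊥ hbot ⊥ hbot b hb le_rfl hR.1 bot_le

end IsSubordination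

theorem stmt11_general (S : Set α) (hS : IsBoundedSublattice S)
    (hc : IsCompactSub S) (R : α → α → Prop) (hR : IsSubordination S R) :
    ∀ a ∈ S, ∀ b ∈ S, (a ≤ sSup {c | c ∈ S ∧ R c b} ↔ R a b) := by
  intro a ha b hb
  refine ⟨fun hle => ?_, fun hab => le_sSup ⟨ha, hab⟩⟩
  have hbot : ⊥ ∈ {c | c ∈ S ∧ R c b} := ⟨hS.1, hR.bot_rel hS.1 hb⟩
  obtain ⟨c, ⟨hcS, hcb⟩, hac⟩ := hc.exists_le_of_le_sSup ha (fun c hc => hc.1) ⟨⊥, hbot⟩ hle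
  exact hR.rel_of_le_left ha hcS hb hac hcb

theorem stmt11 (S : Set α) (hS : IsBoundedSublattice S) (hd : IsDenseSub S)
    (hc : IsCompactSub S) (R : α → α → Prop) (hR : IsSubordination S R) :
    ∀ a ∈ S, ∀ b ∈ S, (a ≤ sSup {c | c ∈ S ∧ R c b} ↔ R a b) :=
  stmt11_general S hS hc R hR
end
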